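/- Let K ≥ 2 be a natural number, let k' ∈ Fin K, let p : Fin K → ℝ satisfy p(k) > 0 for all k and ∑ₖ p(k) = 1, and let ε > 0. Set μ = (1 − p(k'))/(K−1), δ(k) = p(k) − μ for k ≠ k', and v = (1/(K−1))·∑_{k≠k'} δ(k)². Assume there exists ρ ∈ (0,1) with |δ(k)| ≤ ρ·μ for all k ≠ k'. Then | (−log p(k') − ε·∑_{k≠k'} log p(k)) − (−log p(k') − ε·(K−1)·log μ + ((K−1)³·ε / (2·(1−p(k'))²))·v) | ≤ ε·(K−1)^{3/2}·v^{3/2} / (3·(1−ρ)³·μ³). -/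

import Mathlib

/-!
Write `p k = μ (1 + x k)` with `x k = δ k / μ`, so `|x k| ≤ ρ`. Expanding
`log (1 + x) = x - x² / 2 + R x`, the linear terms cancel because the `δ k` sum to zero and the
quadratic terms give the residual-class variance. The remainder `R x = ∫₀ˣ t² / (1 + t) dt` is at
most `|x|³ / (3 (1 - ρ))`, and `∑ |δ k|³ ≤ (∑ δ k²)^(3/2)`.
-/

open Real Finset

theorem hasDerivAt_log_one_add_sub_quadratic {t : ℝ} (ht : 0 < 1 + t) :
    HasDerivAt (fun s ↦ log (1 + s) - (s - s ^ 2 / 2)) (t ^ 2 / (1 + t)) t := by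
  have hlog : HasDerivAt (fun s ↦ log (1 + s)) (1 / (1 + t)) t := by
    simpa using ((hasDerivAt_id t).const_add 1).log ht.ne'
  have hquad : HasDerivAt (fun s : ℝ ↦ s - s ^ 2 / 2) (1 - t) t :=
    ((hasDerivAt_id' t).sub ((hasDerivAt_pow 2 t).div_const 2)).congr_deriv (by norm_num)
  refine (hlog.fun_sub hquad).congr_deriv ?_
  field_simp
  ring

theorem abs_log_one_add_sub_quadratic_le {ρ x : ℝ} (hρ : ρ < 1) (hx : |x| ≤ ρ) :
    |log (1 + x) - (x - x ^ 2 / 2)| ≤ |x| ^ 3 / (3 * (1 - ρ)) := by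
  have hρ' : 0 < 1 - ρ := by linarith
  have hlower : ∀ t ∈ Set.uIcc 0 x, 1 - ρ ≤ 1 + t := fun t ht ↦ by
    rcases Set.mem_uIcc.mp ht with h | h <;> linarith [(abs_le.mp hx).1, abs_nonneg x]
  have hpos : ∀ t ∈ Set.uIcc 0 x, 0 < 1 + t := fun t ht ↦ hρ'.trans_le (hlower t ht)
  have hint : IntervalIntegrable (fun t ↦ t ^ 2 / (1 + t)) MeasureTheory.volume 0 x :=
    (ContinuousOn.div (by fun_prop) (by fun_prop) fun t ht ↦ (hpos t ht).ne').intervalIntegrable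
  have hftc : ∫ t in (0 : ℝ)..x, t ^ 2 / (1 + t) = log (1 + x) - (x - x ^ 2 / 2) := by
    rw [intervalIntegral.integral_eq_sub_of_hasDerivAt
      (fun t ht ↦ hasDerivAt_log_one_add_sub_quadratic (hpos t ht)) hint]
    simp
  have hdom : ∀ t ∈ Set.uIoc 0 x, ‖t ^ 2 / (1 + t)‖ ≤ t ^ 2 / (1 - ρ) := fun t ht ↦ by
    have ht' := Set.uIoc_subset_uIcc ht
    rw [Real.norm_of_nonneg (div_nonneg (sq_nonneg t) (hpos t ht').le)]
    exact div_le_div_of_nonneg_left (sq_nonneg t) hρ' (hlower t ht')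
  calc |log (1 + x) - (x - x ^ 2 / 2)|
      ≤ |∫ t in (0 : ℝ)..x, t ^ 2 / (1 - ρ)| := by
        rw [← hftc, ← Real.norm_eq_abs]
        exact intervalIntegral.norm_integral_le_abs_of_norm_le
          (MeasureTheory.ae_restrict_of_forall_mem measurableSet_uIoc hdom)
          ((by fun_prop : Continuous fun t : ℝ ↦ t ^ 2 / (1 - ρ)).intervalIntegrable 0 x)
    _ = |x| ^ 3 / (3 * (1 - ρ)) := by
        rw [intervalIntegral.integral_div, integral_pow, abs_div, abs_of_pos hρ']
        norm_num [abs_div, abs_pow, div_div]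

theorem sum_abs_pow_three_le_rpow {ι : Type*} (s : Finset ι) (f : ι → ℝ) :
    ∑ k ∈ s, |f k| ^ 3 ≤ (∑ k ∈ s, f k ^ 2) ^ ((3 : ℝ) / 2) := by
  set S := ∑ k ∈ s, f k ^ 2
  have hS : 0 ≤ S := sum_nonneg fun k _ ↦ sq_nonneg _
  have hle : ∀ k ∈ s, |f k| ≤ √S := fun k hk ↦ by
    rw [← sqrt_sq_eq_abs]
    exact sqrt_le_sqrt (single_le_sum (fun i _ ↦ sq_nonneg (f i)) hk)
  calc ∑ k ∈ s, |f k| ^ 3 = ∑ k ∈ s, f k ^ 2 * |f k| := by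
        refine sum_congr rfl fun k _ ↦ ?_
        rw [← sq_abs]; ring
    _ ≤ ∑ k ∈ s, f k ^ 2 * √S := sum_le_sum fun k hk ↦ by gcongr; exact hle k hk
    _ = S ^ ((3 : ℝ) / 2) := by
        rw [← sum_mul, sqrt_eq_rpow, ← rpow_one_add' hS (by norm_num)]
        norm_num

theorem abs_sum_log_one_add_sub_quadratic_le {ι : Type*} (s : Finset ι) (x : ι → ℝ) {ρ : ℝ}
    (hρ : ρ < 1) (hx : ∀ k ∈ s, |x k| ≤ ρ) :
    |∑ k ∈ s, log (1 + x k) - ∑ k ∈ s, (x k - x k ^ 2 / 2)| ≤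
      (∑ k ∈ s, |x k| ^ 3) / (3 * (1 - ρ)) := by
  rw [← sum_sub_distrib, sum_div]
  exact (abs_sum_le_sum_abs _ _).trans
    (sum_le_sum fun k hk ↦ abs_log_one_add_sub_quadratic_le hρ (hx k hk))

theorem abs_sum_log_sub_quadratic_le {ι : Type*} (s : Finset ι) (p : ι → ℝ) {μ ρ : ℝ}
    (hμ : 0 < μ) (hρ : ρ < 1) (hmean : ∑ k ∈ s, p k = #s * μ)
    (hbound : ∀ k ∈ s, |p k - μ| ≤ ρ * μ) :
    |∑ k ∈ s, log (p k) - (#s * log μ - (∑ k ∈ s, (p k - μ) ^ 2) / (2 * μ ^ 2))| ≤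
      (∑ k ∈ s, |p k - μ| ^ 3) / (3 * (1 - ρ) * μ ^ 3) := by
  set x : ι → ℝ := fun k ↦ (p k - μ) / μ
  have hx : ∀ k ∈ s, |x k| ≤ ρ := fun k hk ↦ by
    rw [abs_div, abs_of_pos hμ, div_le_iff₀ hμ]
    exact hbound k hk
  have hlog : ∀ k ∈ s, log (p k) = log μ + log (1 + x k) := fun k hk ↦ by
    have hpos : 0 < 1 + x k := by linarith [neg_abs_le (x k), hx k hk]
    rw [← log_mul hμ.ne' hpos.ne']
    congr 1
    simp only [x]
    field_simp
    ring
  have hlinear : ∑ k ∈ s, x k = 0 := by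
    simp only [x, ← sum_div, sum_sub_distrib, hmean, sum_const, nsmul_eq_mul, sub_self, zero_div]
  have hquadratic : ∑ k ∈ s, (x k - x k ^ 2 / 2) = -(∑ k ∈ s, (p k - μ) ^ 2) / (2 * μ ^ 2) := by
    rw [sum_sub_distrib, hlinear, ← sum_div]
    simp only [x, div_pow, ← sum_div]
    field_simp
    ring
  have hcubic : ∑ k ∈ s, |x k| ^ 3 = (∑ k ∈ s, |p k - μ| ^ 3) / μ ^ 3 := by
    simp only [x, abs_div, abs_of_pos hμ, div_pow, ← sum_div]
  have key := abs_sum_log_one_add_sub_quadratic_le s x hρ hx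
  rw [hquadratic, hcubic, div_div, mul_comm (μ ^ 3)] at key
  rw [sum_congr rfl hlog, sum_add_distrib, sum_const, nsmul_eq_mul]
  convert key using 2
  ring

/-- Quadratic cross-entropy decomposition (Lemma 1): the smoothed cross-entropy
`−log p(k') − ε ∑_{k≠k'} log p(k)` equals
`−log p(k') − ε(K−1) log μ + ((K−1)³ε/(2(1−p(k'))²)) v` up to a remainder bounded by
`ε (K−1)^(3/2) v^(3/2) / (3(1−ρ)³ μ³)`. -/
theorem quadratic_ce_decomposition (K : ℕ) (hK : 2 ≤ K) (k' : Fin K) (p : Fin K → ℝ)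
    (hp : ∀ k, 0 < p k) (hsum : ∑ k, p k = 1) (ε : ℝ) (hε : 0 < ε)
    (ρ : ℝ) (hρ : ρ ∈ Set.Ioo (0 : ℝ) 1)
    (μ : ℝ) (hμ : μ = (1 - p k') / ((K : ℝ) - 1))
    (δ : Fin K → ℝ) (hδ : ∀ k, δ k = p k - μ)
    (v : ℝ) (hv : v = (1 / ((K : ℝ) - 1)) * ∑ k ∈ Finset.univ.erase k', δ k ^ 2)
    (hbound : ∀ k ∈ Finset.univ.erase k', |δ k| ≤ ρ * μ) :
    |(-Real.log (p k') - ε * ∑ k ∈ Finset.univ.erase k', Real.log (p k)) -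
      (-Real.log (p k') - ε * ((K : ℝ) - 1) * Real.log μ +
        (((K : ℝ) - 1) ^ 3 * ε / (2 * (1 - p k') ^ 2)) * v)| ≤
      ε * ((K : ℝ) - 1) ^ ((3 : ℝ) / 2) * v ^ ((3 : ℝ) / 2) /
        (3 * (1 - ρ) ^ 3 * μ ^ 3) := by
  set S := Finset.univ.erase k'
  obtain ⟨hρ0, hρ1⟩ := hρ
  have hK1 : (1 : ℝ) < K := by exact_mod_cast hK
  have hK1' : (K : ℝ) - 1 ≠ 0 := by linarith
  have hcard : (#S : ℝ) = K - 1 := by simp [S, Nat.cast_sub (by omega : 1 ≤ K)]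
  have hsumS : ∑ k ∈ S, p k = 1 - p k' := by
    rw [← hsum, ← add_sum_erase univ p (mem_univ k'), add_sub_cancel_left]
  have hμ_pos : 0 < μ := hμ ▸ div_pos
    (hsumS ▸ sum_pos (fun k _ ↦ hp k) (card_pos.mp (by simp [S]; omega))) (sub_pos.2 hK1)
  have hmass : ((K : ℝ) - 1) * μ = 1 - p k' := by
    rw [hμ]; field_simp
  have hvsum : ∑ k ∈ S, δ k ^ 2 = ((K : ℝ) - 1) * v := by
    rw [hv]; field_simp
  have hv_nonneg : 0 ≤ v := by
    rw [hv]; exact mul_nonneg (by positivity) (sum_nonneg fun k _ ↦ sq_nonneg _)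
  have key := abs_sum_log_sub_quadratic_le S p hμ_pos hρ1 (by rw [hsumS, hcard, hmass])
    (fun k hk ↦ hδ k ▸ hbound k hk)
  simp only [← hδ, hvsum, hcard] at key
  have hcubic := sum_abs_pow_three_le_rpow S δ
  rw [hvsum, mul_rpow (by linarith) hv_nonneg] at hcubic
  have hcube_le : (1 - ρ) ^ 3 ≤ 1 - ρ :=
    pow_le_of_le_one (by linarith) (by linarith) (by norm_num)
  calc _ = ε * |∑ k ∈ S, log (p k) - ((K - 1) * log μ - (K - 1) * v / (2 * μ ^ 2))| := by
        rw [← hmass, ← abs_of_pos hε, ← abs_mul, ← abs_neg, abs_of_pos hε]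
        congr 1
        field_simp
        ring
    _ ≤ ε * ((∑ k ∈ S, |δ k| ^ 3) / (3 * (1 - ρ) * μ ^ 3)) := by gcongr
    _ ≤ ε * (((K : ℝ) - 1) ^ ((3 : ℝ) / 2) * v ^ ((3 : ℝ) / 2) / (3 * (1 - ρ) ^ 3 * μ ^ 3)) := by
        gcongr
    _ = _ := by ring
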